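/- Fix a real k > −1 and let a < b be consecutive positive zeros of J_{k+1} with b < 2·√((k+2)(k+3)). Let c ∈ (a,b) satisfy J_k(c) = 0 and let e ∈ (a,b) satisfy J_{k+3}(e) = 0. Then there exists a unique f ∈ (a,b) with J_{k+4}(f) = 0, and moreover: f ∈ (e, c) if c < √(2(k+1)(k+3)); f ∈ (c, b) if √(2(k+1)(k+3)) < c < 2·√((k+1)(k+2)); and f ∈ (e, b) if c > 2·√((k+1)(k+2)). -/

import Mathlib

/-!
Let `s` be the sign of `J_{k+1}` on `(a, b)`. The ladder identities
`(x^{-ν} J_ν)' = -x^{-ν} J_{ν+1}` and `(x^{ν+1} J_{ν+1})' = x^{ν+1} J_ν` carry sign information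
up one order at a time. Rolle gives a zero `d` of `J_{k+2}` in `(a, b)`, and `s x^{k+2} J_{k+2}`
is increasing, so `s J_{k+2}` changes sign from `-` to `+` at `d`. Hence `s x^{k+3} J_{k+3}`
decreases up to `d` and increases after it; it is negative at `a` by the three-term recurrence,
so `e` is its only zero and `s J_{k+3}` changes sign from `-` to `+` at `e`. One order higher,
`J_{k+4} = (4(k+2)(k+3)/x² - 1) J_{k+2}` at the zeros of `J_{k+1}`, a positive multiple by the
bound on `b`, so the same argument yields a unique zero `f ∈ (e, b)` of `J_{k+4}` at which
`s J_{k+4}` changes sign from `-` to `+`. At the zero `c` of `J_k` the recurrence gives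
`J_{k+4}(c) = 4(k+2)(2(k+1)(k+3) - c²)/c³ · J_{k+1}(c)`, whose sign places `c` on either side
of `f`.
-/

open Real

/-- Bessel function of the first kind of real order `k`, defined by its power series
(valid for `r > 0`, using real powers). -/
noncomputable def besselJ (k r : ℝ) : ℝ :=
  ∑' m : ℕ, ((-1 : ℝ) ^ m / (m.factorial * Real.Gamma (m + k + 1))) * (r / 2) ^ ((2 * m : ℝ) + k)

open Set

noncomputable def besselCoeff (ν : ℝ) (m : ℕ) : ℝ := (-1) ^ m / (m.factorial * Gamma (m + ν + 1))

noncomputable def besselSeries (ν x : ℝ) : ℝ := ∑' m : ℕ, besselCoeff ν m * x ^ m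

lemma succ_mul_besselCoeff_succ (ν : ℝ) (m : ℕ) :
    (m + 1) * besselCoeff ν (m + 1) = -besselCoeff (ν + 1) m := by
  simp only [besselCoeff, Nat.factorial_succ, pow_succ]
  push_cast
  rw [show (m : ℝ) + 1 + ν + 1 = m + (ν + 1) + 1 by ring]
  field_simp

lemma besselCoeff_eq_mul_besselCoeff_add_one {ν : ℝ} (hν : -1 < ν) (m : ℕ) :
    besselCoeff ν m = (m + ν + 1) * besselCoeff (ν + 1) m := by
  have hpos : 0 < (m : ℝ) + ν + 1 := by linarith [m.cast_nonneg (α := ℝ)]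
  simp only [besselCoeff]
  rw [show (m : ℝ) + (ν + 1) + 1 = m + ν + 1 + 1 by ring, Gamma_add_one hpos.ne']
  have := (Gamma_pos_of_pos hpos).ne'
  field_simp

lemma abs_besselCoeff_succ {ν : ℝ} (hν : -1 < ν) (m : ℕ) :
    |besselCoeff ν (m + 1)| = |besselCoeff ν m| / ((m + 1) * (m + ν + 1)) := by
  have hpos : 0 < (m : ℝ) + ν + 1 := by linarith [m.cast_nonneg (α := ℝ)]
  have hsucc : (m + 1) * |besselCoeff ν (m + 1)| = |besselCoeff (ν + 1) m| := by
    rw [← abs_neg (besselCoeff _ m), ← succ_mul_besselCoeff_succ, abs_mul,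
      abs_of_pos (by positivity : (0 : ℝ) < m + 1)]
  rw [besselCoeff_eq_mul_besselCoeff_add_one hν m, abs_mul, abs_of_pos hpos, ← hsucc]
  field_simp

lemma summable_abs_besselCoeff_mul_pow {ν : ℝ} (hν : -1 < ν) {R : ℝ} (hR : 0 ≤ R) :
    Summable fun m => |besselCoeff ν m| * R ^ m := by
  refine summable_of_ratio_norm_eventually_le (r := 1 / 2) (by norm_num) ?_
  filter_upwards [(tendsto_natCast_atTop_atTop (R := ℝ)).eventually_ge_atTop (2 * R)] with m hm
  have hpos : 0 < (m : ℝ) + ν + 1 := by linarith [m.cast_nonneg (α := ℝ)]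
  have hden : 2 * R ≤ (m + 1) * (m + ν + 1) := by nlinarith
  rw [Real.norm_of_nonneg (by positivity), Real.norm_of_nonneg (by positivity),
    abs_besselCoeff_succ hν, pow_succ, div_mul_eq_mul_div, div_le_iff₀ (by positivity)]
  have := mul_nonneg (abs_nonneg (besselCoeff ν m)) (pow_nonneg hR m)
  nlinarith

lemma summable_besselCoeff_mul_pow {ν : ℝ} (hν : -1 < ν) (x : ℝ) :
    Summable fun m => besselCoeff ν m * x ^ m :=
  (summable_abs_besselCoeff_mul_pow hν (abs_nonneg x)).of_norm_bounded fun m => by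
    rw [Real.norm_eq_abs, abs_mul, abs_pow]

lemma hasDerivAt_besselSeries {ν : ℝ} (hν : -1 < ν) (x : ℝ) :
    HasDerivAt (besselSeries ν) (-besselSeries (ν + 1) x) x := by
  set R := |x| + 1
  have hR : 0 < R := by positivity
  -- shifted by one, the bound on the derivatives is the series of order `ν + 1`
  have hbound : Summable fun n => |besselCoeff ν n| * (n * R ^ (n - 1)) := by
    refine (summable_nat_add_iff 1).mp ?_
    refine (summable_abs_besselCoeff_mul_pow (by linarith : -1 < ν + 1) hR.le).congr
      fun n => ?_
    rw [← abs_neg (besselCoeff _ n), ← succ_mul_besselCoeff_succ, abs_mul,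
      abs_of_pos (by positivity : (0 : ℝ) < n + 1)]
    push_cast
    ring
  have hderiv := hasDerivAt_tsum_of_isPreconnected hbound Metric.isOpen_ball
    (convex_ball (0 : ℝ) R).isPreconnected
    (g := fun n y => besselCoeff ν n * y ^ n) (g' := fun n y => besselCoeff ν n * (n * y ^ (n - 1)))
    (fun n y _ => (hasDerivAt_pow n y).const_mul _)
    (fun n y hy => by
      rw [mem_ball_zero_iff, Real.norm_eq_abs] at hy
      rw [Real.norm_eq_abs, abs_mul, abs_mul, abs_pow, Nat.abs_cast]
      gcongr)
    (Metric.mem_ball_self hR) (summable_besselCoeff_mul_pow hν 0)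
    (by rw [mem_ball_zero_iff, Real.norm_eq_abs]; linarith)
  refine (hderiv : HasDerivAt (besselSeries ν) _ x).congr_deriv ?_
  have hsum : Summable fun n => besselCoeff ν n * (n * x ^ (n - 1)) :=
    hbound.of_norm_bounded fun n => by
      rw [Real.norm_eq_abs, abs_mul, abs_mul, abs_pow, Nat.abs_cast]
      gcongr
      linarith [abs_nonneg x]
  rw [hsum.tsum_eq_zero_add, besselSeries, ← tsum_neg]
  simp only [CharP.cast_eq_zero, zero_mul, mul_zero, zero_add, Nat.add_sub_cancel]
  refine tsum_congr fun n => ?_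
  rw [← neg_mul, ← succ_mul_besselCoeff_succ]
  push_cast
  ring

lemma besselSeries_recurrence {μ : ℝ} (hμ : -1 < μ) (x : ℝ) :
    besselSeries μ x = (μ + 1) * besselSeries (μ + 1) x - x * besselSeries (μ + 2) x := by
  have hterm : ∀ m : ℕ, (μ + 1) * (besselCoeff (μ + 1) m * x ^ m) - besselCoeff μ m * x ^ m
      = -(m * besselCoeff (μ + 1) m * x ^ m) := fun m => by
    rw [besselCoeff_eq_mul_besselCoeff_add_one hμ]; ring
  have hsum := ((summable_besselCoeff_mul_pow (by linarith : -1 < μ + 1) x).mul_left (μ + 1)).sub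
    (summable_besselCoeff_mul_pow hμ x)
  simp only [hterm, summable_neg_iff] at hsum
  have hshift : (μ + 1) * besselSeries (μ + 1) x - besselSeries μ x
      = x * besselSeries (μ + 2) x := by
    rw [besselSeries, besselSeries, besselSeries, ← tsum_mul_left, ← Summable.tsum_sub
      ((summable_besselCoeff_mul_pow (by linarith) x).mul_left _)
      (summable_besselCoeff_mul_pow hμ x)]
    simp only [hterm, tsum_neg, hsum.tsum_eq_zero_add, ← tsum_mul_left, CharP.cast_eq_zero,
      zero_mul, zero_add]
    rw [← tsum_neg]
    refine tsum_congr fun n => ?_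
    rw [show μ + 2 = μ + 1 + 1 by ring]
    push_cast
    linear_combination (-x ^ (n + 1)) * succ_mul_besselCoeff_succ (μ + 1) n
  linarith

lemma besselJ_eq_rpow_mul_besselSeries (ν : ℝ) {r : ℝ} (hr : 0 < r) :
    besselJ ν r = (r / 2) ^ ν * besselSeries ν ((r / 2) ^ 2) := by
  rw [besselJ, besselSeries, ← tsum_mul_left]
  refine tsum_congr fun m => ?_
  rw [rpow_add (by positivity), show (2 * m : ℝ) = ((2 * m : ℕ) : ℝ) by push_cast; ring,
    rpow_natCast, pow_mul, besselCoeff]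
  ring

lemma besselJ_add_two {ν : ℝ} (hν : -1 < ν) {r : ℝ} (hr : 0 < r) :
    besselJ (ν + 2) r = 2 * (ν + 1) / r * besselJ (ν + 1) r - besselJ ν r := by
  simp only [besselJ_eq_rpow_mul_besselSeries _ hr, besselSeries_recurrence hν]
  rw [rpow_add (by positivity), rpow_add (by positivity), rpow_one, rpow_two]
  field_simp
  ring

lemma continuousAt_besselJ {ν : ℝ} (hν : -1 < ν) {r : ℝ} (hr : 0 < r) :
    ContinuousAt (besselJ ν) r := by
  have hseries : ContinuousAt (fun x => (x / 2) ^ ν * besselSeries ν ((x / 2) ^ 2)) r :=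
    ((continuousAt_id.div_const 2).rpow_const (Or.inl (by positivity))).mul
      ((hasDerivAt_besselSeries hν _).continuousAt.comp (by fun_prop))
  refine hseries.congr ?_
  filter_upwards [Ioi_mem_nhds hr] with x hx
  exact (besselJ_eq_rpow_mul_besselSeries ν hx).symm

lemma rpow_neg_mul_div_two_rpow {x : ℝ} (hx : 0 < x) (ν : ℝ) :
    x ^ (-ν) * (x / 2) ^ ν = 2 ^ (-ν) := by
  rw [div_rpow hx.le zero_le_two, rpow_neg hx.le, rpow_neg zero_le_two]
  field_simp

lemma hasDerivAt_rpow_neg_mul_besselJ {ν : ℝ} (hν : -1 < ν) {r : ℝ} (hr : 0 < r) :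
    HasDerivAt (fun x => x ^ (-ν) * besselJ ν x) (-(r ^ (-ν) * besselJ (ν + 1) r)) r := by
  have hsq : HasDerivAt (fun x : ℝ => (x / 2) ^ 2) (r / 2) r := by
    refine (((hasDerivAt_id' r).div_const 2).pow 2).congr_deriv ?_
    ring
  have hseries := ((hasDerivAt_besselSeries hν _).comp r hsq).const_mul ((2 : ℝ) ^ (-ν))
  refine (hseries.congr_of_eventuallyEq ?_).congr_deriv ?_
  · filter_upwards [Ioi_mem_nhds hr] with x hx
    rw [besselJ_eq_rpow_mul_besselSeries ν hx, ← mul_assoc, rpow_neg_mul_div_two_rpow hx]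
    rfl
  · rw [besselJ_eq_rpow_mul_besselSeries _ hr, rpow_add_one (by positivity),
      ← rpow_neg_mul_div_two_rpow hr ν]
    ring

lemma hasDerivAt_rpow_mul_besselJ {ν : ℝ} (hν : -1 < ν) {r : ℝ} (hr : 0 < r) :
    HasDerivAt (fun x => x ^ (ν + 1) * besselJ (ν + 1) x) (r * (r ^ ν * besselJ ν r)) r := by
  -- `x ^ (ν + 1) J_{ν+1} = x ^ (2 (ν + 1)) · x ^ (-(ν + 1)) J_{ν+1}`, and the recurrence
  -- collapses the product rule to `x ^ (ν + 1) J_ν`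
  have hpow := hasDerivAt_rpow_const (p := 2 * (ν + 1)) (Or.inl hr.ne')
  have hprod := hpow.mul (hasDerivAt_rpow_neg_mul_besselJ (by linarith : -1 < ν + 1) hr)
  refine (hprod.congr_of_eventuallyEq ?_).congr_deriv ?_
  · filter_upwards [Ioi_mem_nhds hr] with x hx
    rw [Pi.mul_apply, ← mul_assoc, ← rpow_add hx]
    ring_nf
  · have e1 : r ^ (2 * (ν + 1) - 1) * r ^ (-(ν + 1)) = r ^ ν := by
      rw [← rpow_add hr]; ring_nf
    have e2 : r ^ (2 * (ν + 1)) * r ^ (-(ν + 1)) = r ^ ν * r := by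
      rw [← rpow_add hr, ← rpow_add_one hr.ne']; ring_nf
    have hr' : r * (2 * (ν + 1) / r) = 2 * (ν + 1) := by field_simp
    rw [show ν + 1 + 1 = ν + 2 by ring, besselJ_add_two hν hr]
    linear_combination (2 * (ν + 1) * besselJ (ν + 1) r) * e1
      - (2 * (ν + 1) / r * besselJ (ν + 1) r - besselJ ν r) * e2 - r ^ ν * besselJ (ν + 1) r * hr'

lemma IsPreconnected.exists_forall_pos_mul_of_ne_zero {X : Type*} [TopologicalSpace X]
    {S : Set X} {f : X → ℝ} (hS : IsPreconnected S) (hf : ContinuousOn f S)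
    (hne : ∀ x ∈ S, f x ≠ 0) :
    ∃ s : ℝ, ∀ x ∈ S, 0 < s * f x := by
  rcases S.eq_empty_or_nonempty with rfl | ⟨y, hy⟩
  · exact ⟨1, by simp⟩
  refine ⟨f y, fun x hx => ?_⟩
  by_contra! hxy
  obtain ⟨z, hz, hfz⟩ : (0 : ℝ) ∈ f '' S := by
    rcases mul_nonpos_iff.1 hxy with h | h
    · exact hS.intermediate_value hx hy hf ⟨h.2, h.1⟩
    · exact hS.intermediate_value hy hx hf ⟨h.1, h.2⟩
  exact hne z hz hfz

lemma strictMonoOn_Icc_of_hasDerivAt_pos {f f' : ℝ → ℝ} {p q : ℝ}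
    (hf : ∀ x ∈ Icc p q, HasDerivAt f (f' x) x) (hf' : ∀ x ∈ Ioo p q, 0 < f' x) :
    StrictMonoOn f (Icc p q) :=
  strictMonoOn_of_hasDerivWithinAt_pos (convex_Icc p q)
    (fun x hx => (hf x hx).continuousAt.continuousWithinAt)
    (fun x hx => (hf x (interior_subset hx)).hasDerivWithinAt) (by simpa using hf')

lemma strictAntiOn_Icc_of_hasDerivAt_neg {f f' : ℝ → ℝ} {p q : ℝ}
    (hf : ∀ x ∈ Icc p q, HasDerivAt f (f' x) x) (hf' : ∀ x ∈ Ioo p q, f' x < 0) :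
    StrictAntiOn f (Icc p q) :=
  strictAntiOn_of_hasDerivWithinAt_neg (convex_Icc p q)
    (fun x hx => (hf x hx).continuousAt.continuousWithinAt)
    (fun x hx => (hf x (interior_subset hx)).hasDerivWithinAt) (by simpa using hf')

lemma StrictMonoOn.sign_eq_sign_sub {f : ℝ → ℝ} {S : Set ℝ} (hf : StrictMonoOn f S) {z : ℝ}
    (hz : z ∈ S) (hfz : f z = 0) {x : ℝ} (hx : x ∈ S) :
    SignType.sign (f x) = SignType.sign (x - z) := by
  rcases lt_trichotomy x z with h | rfl | h
  · rw [sign_neg (hfz ▸ hf hx hz h), sign_neg (sub_neg.2 h)]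
  · rw [hfz, sub_self]
  · rw [sign_pos (hfz ▸ hf hz hx h), sign_pos (sub_pos.2 h)]

lemma sign_eq_sign_sub_of_strictAntiOn_of_strictMonoOn {f : ℝ → ℝ} {p m q z : ℝ} (hpm : p ≤ m)
    (hanti : StrictAntiOn f (Icc p m)) (hmono : StrictMonoOn f (Icc m q)) (hp : f p < 0)
    (hz : z ∈ Icc p q) (hfz : f z = 0) :
    m < z ∧ ∀ x ∈ Icc p q, SignType.sign (f x) = SignType.sign (x - z) := by
  have hneg : ∀ x ∈ Icc p m, f x < 0 := fun x hx =>
    (hanti.antitoneOn (left_mem_Icc.2 hpm) hx hx.1).trans_lt hp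
  have hmz : m < z := not_le.1 fun h => (hneg z ⟨hz.1, h⟩).ne hfz
  refine ⟨hmz, fun x hx => ?_⟩
  rcases le_total x m with h | h
  · rw [sign_neg (hneg x ⟨hx.1, h⟩), sign_neg (by linarith)]
  · exact hmono.sign_eq_sign_sub ⟨hmz.le, hz.2⟩ hfz ⟨h, hx.2⟩

lemma sign_mul_rpow_mul {x : ℝ} (hx : 0 < x) (s ν y : ℝ) :
    SignType.sign (s * (x ^ ν * y)) = SignType.sign (s * y) := by
  rw [mul_left_comm, sign_mul, sign_pos (rpow_pos_of_pos hx ν), one_mul]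

lemma continuousOn_besselJ {ν : ℝ} (hν : -1 < ν) {p q : ℝ} (hp : 0 < p) :
    ContinuousOn (besselJ ν) (Icc p q) := fun _ hx =>
  (continuousAt_besselJ hν (hp.trans_le hx.1)).continuousWithinAt

lemma exists_mem_Ioo_besselJ_add_one_eq_zero {ν p q : ℝ} (hν : -1 < ν) (hp : 0 < p) (hpq : p < q)
    (hzp : besselJ ν p = 0) (hzq : besselJ ν q = 0) : ∃ ξ ∈ Ioo p q, besselJ (ν + 1) ξ = 0 := by
  have hderiv : ∀ x ∈ Icc p q, HasDerivAt (fun x => x ^ (-ν) * besselJ ν x)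
      (-(x ^ (-ν) * besselJ (ν + 1) x)) x := fun x hx =>
    hasDerivAt_rpow_neg_mul_besselJ hν (hp.trans_le hx.1)
  obtain ⟨ξ, hξ, h⟩ := exists_hasDerivAt_eq_zero hpq
    (fun x hx => (hderiv x hx).continuousAt.continuousWithinAt) (by simp [hzp, hzq])
    (fun x hx => hderiv x (Ioo_subset_Icc_self hx))
  exact ⟨ξ, hξ, by simpa [(rpow_pos_of_pos (hp.trans hξ.1) (-ν)).ne'] using h⟩

lemma strictMonoOn_rpow_mul_besselJ {ν p q s : ℝ} (hν : -1 < ν) (hp : 0 < p)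
    (h : ∀ x ∈ Ioo p q, 0 < s * besselJ ν x) :
    StrictMonoOn (fun x => s * (x ^ (ν + 1) * besselJ (ν + 1) x)) (Icc p q) :=
  strictMonoOn_Icc_of_hasDerivAt_pos
    (fun x hx => (hasDerivAt_rpow_mul_besselJ hν (hp.trans_le hx.1)).const_mul s) fun x hx => by
      have hx0 := hp.trans hx.1
      rw [mul_left_comm, mul_left_comm _ (x ^ ν)]
      exact mul_pos hx0 (mul_pos (rpow_pos_of_pos hx0 ν) (h x hx))

lemma strictAntiOn_rpow_mul_besselJ {ν p q s : ℝ} (hν : -1 < ν) (hp : 0 < p)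
    (h : ∀ x ∈ Ioo p q, s * besselJ ν x < 0) :
    StrictAntiOn (fun x => s * (x ^ (ν + 1) * besselJ (ν + 1) x)) (Icc p q) :=
  strictAntiOn_Icc_of_hasDerivAt_neg
    (fun x hx => (hasDerivAt_rpow_mul_besselJ hν (hp.trans_le hx.1)).const_mul s) fun x hx => by
      have hx0 := hp.trans hx.1
      rw [mul_left_comm, mul_left_comm _ (x ^ ν)]
      exact mul_neg_of_pos_of_neg hx0 (mul_neg_of_pos_of_neg (rpow_pos_of_pos hx0 ν) (h x hx))

lemma sign_besselJ_add_one_eq_sign_sub {ν p q m z s : ℝ} (hν : -1 < ν) (hp : 0 < p)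
    (hm : m ∈ Icc p q)
    (hsign : ∀ x ∈ Icc p q, SignType.sign (s * besselJ ν x) = SignType.sign (x - m))
    (hneg : s * besselJ (ν + 1) p < 0) (hz : z ∈ Icc p q) (hJz : besselJ (ν + 1) z = 0) :
    m < z ∧ ∀ x ∈ Icc p q, SignType.sign (s * besselJ (ν + 1) x) = SignType.sign (x - z) := by
  have hanti := strictAntiOn_rpow_mul_besselJ (q := m) hν hp fun x hx =>
    sign_eq_neg_one_iff.1 <| (hsign x ⟨hx.1.le, hx.2.le.trans hm.2⟩).trans
      (sign_neg (sub_neg.2 hx.2))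
  have hmono := strictMonoOn_rpow_mul_besselJ (q := q) hν (hp.trans_le hm.1) fun x hx =>
    sign_eq_one_iff.1 <| (hsign x ⟨hm.1.trans hx.1.le, hx.2.le⟩).trans
      (sign_pos (sub_pos.2 hx.1))
  have hp' : s * (p ^ (ν + 1) * besselJ (ν + 1) p) < 0 := by
    rw [mul_left_comm]; exact mul_neg_of_pos_of_neg (rpow_pos_of_pos hp _) hneg
  obtain ⟨hmz, hsign'⟩ := sign_eq_sign_sub_of_strictAntiOn_of_strictMonoOn hm.1 hanti hmono hp'
    hz (by simp [hJz])
  exact ⟨hmz, fun x hx => by rw [← hsign' x hx, sign_mul_rpow_mul (hp.trans_le hx.1)]⟩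

lemma besselJ_add_three_of_besselJ_add_one_eq_zero {ν x : ℝ} (hν : -1 < ν) (hx : 0 < x)
    (h : besselJ (ν + 1) x = 0) : besselJ (ν + 3) x = 2 * (ν + 2) / x * besselJ (ν + 2) x := by
  have hrec := besselJ_add_two (ν := ν + 1) (by linarith) hx
  norm_num [add_assoc, h] at hrec
  exact hrec

lemma besselJ_add_four_of_besselJ_add_one_eq_zero {ν x : ℝ} (hν : -1 < ν) (hx : 0 < x)
    (h : besselJ (ν + 1) x = 0) :
    besselJ (ν + 4) x = (4 * (ν + 2) * (ν + 3) / x ^ 2 - 1) * besselJ (ν + 2) x := by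
  have hrec := besselJ_add_two (ν := ν + 2) (by linarith) hx
  norm_num [add_assoc] at hrec
  rw [hrec, besselJ_add_three_of_besselJ_add_one_eq_zero hν hx h]
  field_simp
  ring

lemma besselJ_add_four_of_besselJ_eq_zero {ν x : ℝ} (hν : -1 < ν) (hx : 0 < x)
    (h : besselJ ν x = 0) :
    besselJ (ν + 4) x
      = 4 * (ν + 2) * (2 * (ν + 1) * (ν + 3) - x ^ 2) / x ^ 3 * besselJ (ν + 1) x := by
  have h2 := besselJ_add_two hν hx
  have h3 := besselJ_add_two (ν := ν + 1) (by linarith) hx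
  have h4 := besselJ_add_two (ν := ν + 2) (by linarith) hx
  norm_num [add_assoc] at h3 h4
  rw [h4, h3, h2, h]
  field_simp
  ring

lemma exists_sign_besselJ_add_two {k a b s : ℝ} (hk : -1 < k) (ha : 0 < a) (hab : a < b)
    (hza : besselJ (k + 1) a = 0) (hzb : besselJ (k + 1) b = 0)
    (hs : ∀ x ∈ Ioo a b, 0 < s * besselJ (k + 1) x) :
    ∃ d ∈ Ioo a b, ∀ x ∈ Icc a b,
      SignType.sign (s * besselJ (k + 2) x) = SignType.sign (x - d) := by
  have hk1 : -1 < k + 1 := by linarith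
  obtain ⟨d, hd, hJd⟩ := exists_mem_Ioo_besselJ_add_one_eq_zero hk1 ha hab hza hzb
  have hmono := strictMonoOn_rpow_mul_besselJ hk1 ha hs
  rw [show k + 1 + 1 = k + 2 by ring] at hJd hmono
  refine ⟨d, hd, fun x hx => ?_⟩
  rw [← sign_mul_rpow_mul (ha.trans_le hx.1) s (k + 2)]
  exact hmono.sign_eq_sign_sub (Ioo_subset_Icc_self hd) (by simp [hJd]) hx

lemma sign_besselJ_add_three {k a b s e : ℝ} (hk : -1 < k) (ha : 0 < a) (hab : a < b)
    (hza : besselJ (k + 1) a = 0) (hzb : besselJ (k + 1) b = 0)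
    (hs : ∀ x ∈ Ioo a b, 0 < s * besselJ (k + 1) x)
    (he : e ∈ Ioo a b) (hze : besselJ (k + 3) e = 0) :
    ∀ x ∈ Icc a b, SignType.sign (s * besselJ (k + 3) x) = SignType.sign (x - e) := by
  obtain ⟨d, hd, hsign⟩ := exists_sign_besselJ_add_two hk ha hab hza hzb hs
  have hJa : s * besselJ (k + 2) a < 0 :=
    sign_eq_neg_one_iff.1 <| (hsign a (left_mem_Icc.2 hab.le)).trans (sign_neg (sub_neg.2 hd.1))
  have hneg : s * besselJ (k + 2 + 1) a < 0 := by
    rw [show k + 2 + 1 = k + 3 by ring, besselJ_add_three_of_besselJ_add_one_eq_zero hk ha hza,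
      mul_left_comm]
    exact mul_neg_of_pos_of_neg (div_pos (by linarith) ha) hJa
  have hsign3 := sign_besselJ_add_one_eq_sign_sub (by linarith) ha (Ioo_subset_Icc_self hd) hsign
    hneg (Ioo_subset_Icc_self he) (by rwa [show k + 2 + 1 = k + 3 by ring])
  rw [show k + 2 + 1 = k + 3 by ring] at hsign3
  exact hsign3.2

lemma exists_sign_besselJ_add_four {k a b s e : ℝ} (hk : -1 < k) (ha : 0 < a) (hab : a < b)
    (hza : besselJ (k + 1) a = 0) (hzb : besselJ (k + 1) b = 0)
    (hs : ∀ x ∈ Ioo a b, 0 < s * besselJ (k + 1) x)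
    (he : e ∈ Ioo a b) (hze : besselJ (k + 3) e = 0) (hb : b < 2 * √((k + 2) * (k + 3))) :
    ∃ f ∈ Ioo e b, besselJ (k + 4) f = 0 ∧
      ∀ x ∈ Icc a b, SignType.sign (s * besselJ (k + 4) x) = SignType.sign (x - f) := by
  obtain ⟨d, hd, hsign2⟩ := exists_sign_besselJ_add_two hk ha hab hza hzb hs
  have hsign3 := sign_besselJ_add_three hk ha hab hza hzb hs he hze
  have hfactor : ∀ x ∈ Icc a b, 0 < 4 * (k + 2) * (k + 3) / x ^ 2 - 1 := fun x hx => by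
    have hx0 := ha.trans_le hx.1
    have hsq := pow_lt_pow_left₀ (hx.2.trans_lt hb) hx0.le two_ne_zero
    rw [mul_pow, sq_sqrt (by nlinarith)] at hsq
    rw [sub_pos, one_lt_div (by positivity)]
    linarith
  have hJa : s * besselJ (k + 4) a < 0 := by
    rw [besselJ_add_four_of_besselJ_add_one_eq_zero hk ha hza, mul_left_comm]
    refine mul_neg_of_pos_of_neg (hfactor a (left_mem_Icc.2 hab.le)) (sign_eq_neg_one_iff.1 ?_)
    exact (hsign2 a (left_mem_Icc.2 hab.le)).trans (sign_neg (sub_neg.2 hd.1))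
  have hJb : 0 < s * besselJ (k + 4) b := by
    rw [besselJ_add_four_of_besselJ_add_one_eq_zero hk (ha.trans hab) hzb, mul_left_comm]
    refine mul_pos (hfactor b (right_mem_Icc.2 hab.le)) (sign_eq_one_iff.1 ?_)
    exact (hsign2 b (right_mem_Icc.2 hab.le)).trans (sign_pos (sub_pos.2 hd.2))
  obtain ⟨f, hf, hJf⟩ := intermediate_value_Ioo hab.le
    (continuousOn_const.mul (continuousOn_besselJ (by linarith : -1 < k + 4) ha)) ⟨hJa, hJb⟩
  have hJf' : besselJ (k + 4) f = 0 :=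
    (mul_eq_zero.1 hJf).resolve_left fun hs0 => by simp [hs0] at hJa
  have hsign4 := sign_besselJ_add_one_eq_sign_sub (by linarith) ha (Ioo_subset_Icc_self he)
    hsign3 (by rwa [show k + 3 + 1 = k + 4 by ring]) (Ioo_subset_Icc_self hf)
    (by rwa [show k + 3 + 1 = k + 4 by ring])
  rw [show k + 3 + 1 = k + 4 by ring] at hsign4
  exact ⟨f, ⟨hsign4.1, hf.2⟩, hJf', hsign4.2⟩

/-- Location of the zero of `J_{k+4}` between consecutive zeros `a < b` of `J_{k+1}` with
`b < 2√((k+2)(k+3))`, depending on the position of the zero `c` of `J_k`. -/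
theorem besselJ_add_four_zero_location (k : ℝ) (hk : -1 < k) (a b : ℝ)
    (ha : 0 < a) (hab : a < b)
    (hza : besselJ (k + 1) a = 0) (hzb : besselJ (k + 1) b = 0)
    (hne : ∀ r ∈ Set.Ioo a b, besselJ (k + 1) r ≠ 0)
    (hb : b < 2 * Real.sqrt ((k + 2) * (k + 3)))
    (c : ℝ) (hc : c ∈ Set.Ioo a b) (hzc : besselJ k c = 0)
    (e : ℝ) (he : e ∈ Set.Ioo a b) (hze : besselJ (k + 3) e = 0) :
    (∃! f, f ∈ Set.Ioo a b ∧ besselJ (k + 4) f = 0) ∧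
    ∀ f, f ∈ Set.Ioo a b → besselJ (k + 4) f = 0 →
      (c < Real.sqrt (2 * (k + 1) * (k + 3)) → f ∈ Set.Ioo e c) ∧
      (Real.sqrt (2 * (k + 1) * (k + 3)) < c ∧ c < 2 * Real.sqrt ((k + 1) * (k + 2)) →
        f ∈ Set.Ioo c b) ∧
      (2 * Real.sqrt ((k + 1) * (k + 2)) < c → f ∈ Set.Ioo e b) := by
  have hc0 : 0 < c := ha.trans hc.1
  obtain ⟨s, hs⟩ := isPreconnected_Ioo.exists_forall_pos_mul_of_ne_zero
    (fun x hx => (continuousAt_besselJ (by linarith) (ha.trans hx.1)).continuousWithinAt) hne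
  obtain ⟨f₀, hf₀, hJf₀, hsign⟩ := exists_sign_besselJ_add_four hk ha hab hza hzb hs he hze hb
  have hunique : ∀ f ∈ Ioo a b, besselJ (k + 4) f = 0 → f = f₀ := fun f hf hJf => by
    have := hsign f (Ioo_subset_Icc_self hf)
    rwa [hJf, mul_zero, _root_.sign_zero, eq_comm, _root_.sign_eq_zero_iff, sub_eq_zero] at this
  have hsign_c : SignType.sign (c - f₀) = SignType.sign (2 * (k + 1) * (k + 3) - c ^ 2) := by
    have hfactor : 0 < 4 * (k + 2) / c ^ 3 * (s * besselJ (k + 1) c) :=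
      mul_pos (div_pos (by linarith) (by positivity)) (hs c hc)
    rw [← hsign c (Ioo_subset_Icc_self hc), besselJ_add_four_of_besselJ_eq_zero hk hc0 hzc,
      show ∀ y z : ℝ, s * (4 * (k + 2) * z / c ^ 3 * y) = 4 * (k + 2) / c ^ 3 * (s * y) * z by
        intros; ring, sign_mul, sign_pos hfactor, one_mul]
  refine ⟨⟨f₀, ⟨⟨he.1.trans hf₀.1, hf₀.2⟩, hJf₀⟩, fun f hf => hunique f hf.1 hf.2⟩, ?_⟩
  intro f hf hJf
  obtain rfl := hunique f hf hJf
  refine ⟨fun h => ⟨hf₀.1, ?_⟩, fun h => ⟨?_, hf₀.2⟩, fun _ => hf₀⟩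
  · rwa [sign_pos (sub_pos.2 ((lt_sqrt hc0.le).1 h)), sign_eq_one_iff, sub_pos] at hsign_c
  · rwa [sign_neg (sub_neg.2 ((sqrt_lt' hc0).1 h.1)), sign_eq_neg_one_iff, sub_neg] at hsign_c
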